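/- arXiv:2306.11111 — 6 statements merged into one kernel-verified Lean document; each statement's English description precedes it below -/
import Mathlib

section
/- The algebra μ1 defined on a basis {e_1,…,e_{n−2k}, f_1,…,f_{2k}} (with n ≥ 2k+4, k ≥ 1) by [e_i,e_1] = e_{i+1} for 1 ≤ i ≤ n−2k−1, [e_1,f_j] = f_{k+j} for 1 ≤ j ≤ k, and all other products of basis elements zero, is a Leibniz algebra (the right Leibniz identity holds). -/
/-- Underlying space of the `p`-filiform Leibniz algebra `μ₁`:
`e`-part has `m + 4 = n - 2k` coordinates, `f`-part has `2(k+1)` coordinates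
(so the paper's `k ≥ 1` is `k + 1` here, and `n = (m + 4) + 2(k + 1) ≥ 2k + 4`). -/
abbrev MuV (m k : ℕ) (K : Type*) := (Fin (m + 4) → K) × (Fin (2 * (k + 1)) → K)

variable {K : Type*} [Field K]

/-- Basis vector `e_{i+1}` (0-indexed). -/
def eb (K : Type*) [Field K] (m k : ℕ) (i : Fin (m + 4)) : MuV m k K := (Pi.single i 1, 0)

/-- Basis vector `f_{j+1}` (0-indexed). -/
def fb (K : Type*) [Field K] (m k : ℕ) (j : Fin (2 * (k + 1))) : MuV m k K := (0, Pi.single j 1)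

/-- The bracket of `μ₁`: `[e_i, e_1] = e_{i+1}` for `1 ≤ i ≤ n - 2k - 1` and
`[e_1, f_j] = f_{k+j}` for `1 ≤ j ≤ k` (paper indexing), all other products zero. -/
def mu1Br (K : Type*) [Field K] (m k : ℕ) (x y : MuV m k K) : MuV m k K :=
  (fun i => if 1 ≤ (i : ℕ) then
      x.1 ⟨(i : ℕ) - 1, lt_of_le_of_lt (Nat.sub_le _ _) i.isLt⟩ * y.1 ⟨0, Nat.succ_pos _⟩
    else 0,
   fun j => if k + 1 ≤ (j : ℕ) then
      x.1 ⟨0, Nat.succ_pos _⟩ * y.2 ⟨(j : ℕ) - (k + 1), lt_of_le_of_lt (Nat.sub_le _ _) j.isLt⟩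
    else 0)

/-- `φ` is an automorphism of `μ₁`. -/
def IsMu1Aut (m k : ℕ) (φ : MuV m k K →ₗ[K] MuV m k K) : Prop :=
  Function.Bijective φ ∧ ∀ x y, φ (mu1Br K m k x y) = mu1Br K m k (φ x) (φ y)

/-- `Δ` is a local automorphism of `μ₁`. -/
def IsMu1LocAut (m k : ℕ) (Δ : MuV m k K →ₗ[K] MuV m k K) : Prop :=
  ∀ x, ∃ φ : MuV m k K →ₗ[K] MuV m k K, IsMu1Aut m k φ ∧ Δ x = φ x


/-- `μ₁` is a Leibniz algebra: the right Leibniz identity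
`[x,[y,z]] = [[x,y],z] - [[x,z],y]` holds. -/
theorem stmt3 (K : Type*) [Field K] [CharZero K] (m k : ℕ) :
    ∀ x y z : MuV m k K,
      mu1Br K m k x (mu1Br K m k y z) =
        mu1Br K m k (mu1Br K m k x y) z - mu1Br K m k (mu1Br K m k x z) y := by
  intro x y z
  refine Prod.ext ?_ ?_
  · funext i
    have h0 : ¬ (1 ≤ (0:ℕ)) := by omega
    simp only [mu1Br, Prod.fst_sub, Pi.sub_apply, if_neg h0, mul_zero]
    split
    · by_cases hc : 1 ≤ (i:ℕ) - 1 <;> simp [hc] <;> ring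
    · simp
  · funext j
    simp only [mu1Br, Prod.snd_sub, Pi.sub_apply]
    split
    · rename_i hj
      have h1 : ¬ (1 ≤ (0 : ℕ)) := by omega
      have h2 : ¬ (k + 1 ≤ (j : ℕ) - (k + 1)) := by
        have := j.isLt; omega
      simp [h1, h2]
    · simp
end

section
/- The Leibniz algebra μ1 is nilpotent: its lower central series satisfies μ1^{n−2k+1} = 0, and μ1^i = span{e_i,…,e_{n−2k}} + span{f_{k+1},…,f_{2k}} for i = 2, and μ1^i = span{e_i,…,e_{n−2k}} for 3 ≤ i ≤ n−2k. -/
variable {K : Type*} [Field K]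

/-- The lower central series of `μ₁`: `mu1lcs 0 = μ₁¹ = μ₁`, `mu1lcs i = μ₁^{i+1}`. -/
def mu1lcs (K : Type*) [Field K] (m k : ℕ) : ℕ → Submodule K (MuV m k K)
  | 0 => ⊤
  | i + 1 => Submodule.span K
      {z | ∃ a ∈ mu1lcs K m k i, ∃ b : MuV m k K, z = mu1Br K m k a b}

-- auxiliary work starts here

/-- Submodule with first `i` `e`-coords zero and no `f`-part. -/
def Pe (K : Type*) [Field K] (m k i : ℕ) : Submodule K (MuV m k K) where
  carrier := {x | (∀ s : Fin (m + 4), (s : ℕ) < i → x.1 s = 0) ∧ x.2 = 0}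
  add_mem' := by
    intro a b ha hb
    exact ⟨fun s hs => by simp [ha.1 s hs, hb.1 s hs], by simp [ha.2, hb.2]⟩
  zero_mem' := ⟨fun s _ => rfl, rfl⟩
  smul_mem' := by
    intro c a ha
    exact ⟨fun s hs => by simp [ha.1 s hs], by simp [ha.2]⟩

/-- μ₁² as an explicit submodule. -/
def Qs (K : Type*) [Field K] (m k : ℕ) : Submodule K (MuV m k K) where
  carrier := {x | (∀ s : Fin (m + 4), (s : ℕ) < 1 → x.1 s = 0) ∧
    ∀ j : Fin (2 * (k + 1)), (j : ℕ) < k + 1 → x.2 j = 0}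
  add_mem' := by
    intro a b ha hb
    exact ⟨fun s hs => by simp [ha.1 s hs, hb.1 s hs], fun j hj => by simp [ha.2 j hj, hb.2 j hj]⟩
  zero_mem' := ⟨fun s _ => rfl, fun j _ => rfl⟩
  smul_mem' := by
    intro c a ha
    exact ⟨fun s hs => by simp [ha.1 s hs], fun j hj => by simp [ha.2 j hj]⟩

lemma mem_Pe {m k i : ℕ} {x : MuV m k K} :
    x ∈ Pe K m k i ↔ (∀ s : Fin (m + 4), (s : ℕ) < i → x.1 s = 0) ∧ x.2 = 0 := Iff.rfl

lemma mem_Qs {m k : ℕ} {x : MuV m k K} :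
    x ∈ Qs K m k ↔ (∀ s : Fin (m + 4), (s : ℕ) < 1 → x.1 s = 0) ∧
      ∀ j : Fin (2 * (k + 1)), (j : ℕ) < k + 1 → x.2 j = 0 := Iff.rfl

/-- Decomposition of an element into basis vectors. -/
lemma decomp (m k : ℕ) (x : MuV m k K) :
    x = (∑ t : Fin (m + 4), x.1 t • eb K m k t) + ∑ j : Fin (2 * (k + 1)), x.2 j • fb K m k j := by
  refine Prod.ext ?_ ?_
  · funext s
    simp [eb, fb, Prod.fst_sum, Prod.snd_sum, Finset.sum_apply, Pi.single_apply]
  · funext j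
    simp [eb, fb, Prod.fst_sum, Prod.snd_sum, Finset.sum_apply, Pi.single_apply]

/-- `e_{t+1} = [e_t, e_1]`. -/
lemma br_eb (m k : ℕ) (t : Fin (m + 4)) (ht : (t : ℕ) + 1 < m + 4) :
    mu1Br K m k (eb K m k t) (eb K m k 0) = eb K m k ⟨(t : ℕ) + 1, ht⟩ := by
  refine Prod.ext (funext fun s => ?_) (funext fun j => ?_)
  · simp only [mu1Br, eb, Pi.single_apply, Fin.ext_iff, Fin.val_zero]
    split_ifs <;> first | ring1 | omega
  · simp [mu1Br, eb]

/-- `f_{k+1+j} = [e_1, f_j]`. -/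
lemma br_fb (m k : ℕ) (j : Fin (2 * (k + 1))) (hj : k + 1 ≤ (j : ℕ)) :
    mu1Br K m k (eb K m k 0)
      (fb K m k ⟨(j : ℕ) - (k + 1), lt_of_le_of_lt (Nat.sub_le _ _) j.isLt⟩) = fb K m k j := by
  refine Prod.ext (funext fun s => ?_) (funext fun j' => ?_)
  · simp [mu1Br, eb, fb]
  · simp only [mu1Br, eb, fb, Pi.single_apply, Fin.ext_iff, Fin.val_zero]
    split_ifs <;> first | ring1 | omega

/-- Brackets with left factor in `Qs` land in `Pe 2`; more generally left in `Pe i` (i ≥ 1) lands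
in `Pe (i+1)`. -/
lemma br_mem_Pe (m k i : ℕ) (hi : 1 ≤ i) (a b : MuV m k K)
    (h1 : ∀ s : Fin (m + 4), (s : ℕ) < i → a.1 s = 0) :
    mu1Br K m k a b ∈ Pe K m k (i + 1) := by
  refine ⟨fun s hs => ?_, ?_⟩
  · simp only [mu1Br]
    split_ifs with h
    · rw [h1 ⟨(s : ℕ) - 1, _⟩ (by simp; omega), zero_mul]
    · rfl
  · funext j'
    simp only [mu1Br]
    split_ifs with h
    · rw [h1 ⟨0, _⟩ (by simp; omega), zero_mul]; rfl
    · rfl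

lemma br_mem_Qs (m k : ℕ) (a b : MuV m k K) : mu1Br K m k a b ∈ Qs K m k := by
  refine ⟨fun s hs => ?_, fun j hj => ?_⟩
  · simp only [mu1Br]
    rw [if_neg (by omega)]
  · simp only [mu1Br]
    rw [if_neg (by omega)]

lemma eb_mem_Pe (m k i : ℕ) (t : Fin (m + 4)) (ht : i ≤ (t : ℕ)) : eb K m k t ∈ Pe K m k i := by
  refine ⟨fun s hs => ?_, rfl⟩
  simp [eb, Pi.single_apply, Fin.ext_iff]
  omega

lemma eb_mem_Qs (m k : ℕ) (t : Fin (m + 4)) (ht : 1 ≤ (t : ℕ)) : eb K m k t ∈ Qs K m k := by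
  refine ⟨fun s hs => ?_, fun j _ => rfl⟩
  simp [eb, Pi.single_apply, Fin.ext_iff]
  omega

/-- Elements of `Pe i` are in the span of `{e_t : t ≥ i}`. -/
lemma Pe_le_span (m k i : ℕ) :
    Pe K m k i ≤ Submodule.span K {x | ∃ t : Fin (m + 4), i ≤ (t : ℕ) ∧ x = eb K m k t} := by
  intro x hx
  obtain ⟨h1, h2⟩ := hx
  have hd := decomp m k x
  rw [h2] at hd
  simp only [Pi.zero_apply, zero_smul, Finset.sum_const_zero, add_zero] at hd
  rw [hd]
  refine Submodule.sum_mem _ fun t _ => ?_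
  by_cases ht : i ≤ (t : ℕ)
  · exact Submodule.smul_mem _ _ (Submodule.subset_span ⟨t, ht, rfl⟩)
  · rw [h1 t (by omega), zero_smul]
    exact Submodule.zero_mem _

lemma Qs_le_span (m k : ℕ) :
    Qs K m k ≤ Submodule.span K
      ({x | ∃ i : Fin (m + 4), 1 ≤ (i : ℕ) ∧ x = eb K m k i} ∪
       {x | ∃ j : Fin (2 * (k + 1)), k + 1 ≤ (j : ℕ) ∧ x = fb K m k j}) := by
  intro x hx
  obtain ⟨h1, h2⟩ := hx
  rw [decomp m k x]
  refine Submodule.add_mem _ (Submodule.sum_mem _ fun t _ => ?_)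
    (Submodule.sum_mem _ fun j _ => ?_)
  · by_cases ht : 1 ≤ (t : ℕ)
    · exact Submodule.smul_mem _ _ (Submodule.subset_span (Or.inl ⟨t, ht, rfl⟩))
    · rw [h1 t (by omega), zero_smul]; exact Submodule.zero_mem _
  · by_cases hj : k + 1 ≤ (j : ℕ)
    · exact Submodule.smul_mem _ _ (Submodule.subset_span (Or.inr ⟨j, hj, rfl⟩))
    · rw [h2 j (by omega), zero_smul]; exact Submodule.zero_mem _

/-- μ₁² = Qs. -/
lemma lcs_one (m k : ℕ) : mu1lcs K m k 1 = Qs K m k := by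
  apply le_antisymm
  · rw [show mu1lcs K m k 1 = Submodule.span K
      {z | ∃ a ∈ mu1lcs K m k 0, ∃ b : MuV m k K, z = mu1Br K m k a b} from rfl,
      Submodule.span_le]
    rintro z ⟨a, _, b, rfl⟩
    exact br_mem_Qs m k a b
  · intro x hx
    refine SetLike.le_def.mp (Submodule.span_le.mpr ?_) (Qs_le_span m k hx)
    rintro z (⟨t, ht, rfl⟩ | ⟨j, hj, rfl⟩)
    · rw [show mu1lcs K m k 1 = Submodule.span K
        {z | ∃ a ∈ mu1lcs K m k 0, ∃ b : MuV m k K, z = mu1Br K m k a b} from rfl]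
      have h4 : (t : ℕ) - 1 < m + 4 := lt_of_le_of_lt (Nat.sub_le _ _) t.isLt
      refine Submodule.subset_span ⟨eb K m k ⟨(t : ℕ) - 1, h4⟩, trivial, eb K m k 0, ?_⟩
      rw [br_eb m k ⟨(t : ℕ) - 1, h4⟩ (by simp; omega)]
      congr 1
      simp [Fin.ext_iff]
      omega
    · rw [show mu1lcs K m k 1 = Submodule.span K
        {z | ∃ a ∈ mu1lcs K m k 0, ∃ b : MuV m k K, z = mu1Br K m k a b} from rfl]
      exact Submodule.subset_span ⟨eb K m k 0, trivial, _, (br_fb m k j hj).symm⟩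

/-- For `i ≥ 2`, `mu1lcs i = Pe i`. -/
lemma lcs_ge_two (m k : ℕ) : ∀ i, 2 ≤ i → mu1lcs K m k i = Pe K m k i := by
  intro i hi
  induction i with
  | zero => omega
  | succ n ih =>
    apply le_antisymm
    · rw [mu1lcs, Submodule.span_le]
      rintro z ⟨a, ha, b, rfl⟩
      rcases Nat.lt_or_ge n 2 with hn | hn
      · -- n = 1, use Qs
        have hn1 : n = 1 := by omega
        subst hn1
        rw [lcs_one] at ha
        exact br_mem_Pe m k 1 le_rfl a b ha.1
      · rw [ih hn] at ha
        exact br_mem_Pe m k n (by omega) a b ha.1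
    · intro x hx
      refine SetLike.le_def.mp (Submodule.span_le.mpr ?_) (Pe_le_span m k (n + 1) hx)
      rintro z ⟨t, ht, rfl⟩
      rw [mu1lcs]
      have h4 : (t : ℕ) - 1 < m + 4 := lt_of_le_of_lt (Nat.sub_le _ _) t.isLt
      have hmem : eb K m k ⟨(t : ℕ) - 1, h4⟩ ∈ mu1lcs K m k n := by
        rcases Nat.lt_or_ge n 2 with hn | hn
        · have hn1 : n = 1 := by omega
          subst hn1
          rw [lcs_one]
          exact eb_mem_Qs m k _ (by simp; omega)
        · rw [ih hn]
          exact eb_mem_Pe m k n _ (by simp; omega)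
      refine Submodule.subset_span ⟨_, hmem, eb K m k 0, ?_⟩
      rw [br_eb m k ⟨(t : ℕ) - 1, h4⟩ (by simp; omega)]
      congr 1
      simp [Fin.ext_iff]
      omega

/-- `μ₁` is nilpotent: `μ₁^{n-2k+1} = 0`,
`μ₁² = span{e_2, …, e_{n-2k}} + span{f_{k+1}, …, f_{2k}}`, and
`μ₁^i = span{e_i, …, e_{n-2k}}` for `3 ≤ i ≤ n - 2k`
(here `mu1lcs (i-1) = μ₁^i`, `n - 2k = m + 4`, paper `k` is `k + 1`). -/
theorem stmt4 (K : Type*) [Field K] [CharZero K] (m k : ℕ) :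
    mu1lcs K m k (m + 4) = ⊥ ∧
    mu1lcs K m k 1 =
      Submodule.span K
        ({x | ∃ i : Fin (m + 4), 1 ≤ (i : ℕ) ∧ x = eb K m k i} ∪
         {x | ∃ j : Fin (2 * (k + 1)), k + 1 ≤ (j : ℕ) ∧ x = fb K m k j}) ∧
    (∀ i : ℕ, 2 ≤ i → i ≤ m + 3 →
      mu1lcs K m k i =
        Submodule.span K {x | ∃ t : Fin (m + 4), i ≤ (t : ℕ) ∧ x = eb K m k t}) := by
  refine ⟨?_, ?_, ?_⟩
  · rw [lcs_ge_two m k (m + 4) (by omega), eq_bot_iff]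
    intro x hx
    obtain ⟨h1, h2⟩ := hx
    have hx0 : x = 0 := Prod.ext (funext fun s => h1 s s.isLt) h2
    simp [hx0]
  · apply le_antisymm
    · rw [lcs_one]
      exact Qs_le_span m k
    · rw [Submodule.span_le]
      rintro z (⟨t, ht, rfl⟩ | ⟨j, hj, rfl⟩)
      · rw [lcs_one]
        exact eb_mem_Qs m k t ht
      · rw [lcs_one]
        refine ⟨fun s _ => ?_, fun j' hj' => ?_⟩
        · simp [fb]
        · simp [fb, Pi.single_apply, Fin.ext_iff]
          omega
  · intro i hi2 _
    rw [lcs_ge_two m k i hi2]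
    apply le_antisymm (Pe_le_span m k i)
    rw [Submodule.span_le]
    rintro z ⟨t, ht, rfl⟩
    exact eb_mem_Pe m k i t ht
end

section
/- Let φ be an automorphism of the Leibniz algebra μ1, and write φ(e_1) = Σ_{i=1}^{n−2k} a_i e_i + Σ_{i=1}^{2k} b_i f_i. Then a_1 ≠ 0. -/
variable {K : Type*} [Field K]

/-- For any automorphism `φ` of `μ₁`, writing
`φ(e_1) = Σ a_i e_i + Σ b_i f_i`, one has `a_1 ≠ 0`. -/
theorem stmt5 (K : Type*) [Field K] [CharZero K] (m k : ℕ)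
    (φ : MuV m k K →ₗ[K] MuV m k K) (hφ : IsMu1Aut m k φ) :
    (φ (eb K m k ⟨0, Nat.succ_pos _⟩)).1 ⟨0, Nat.succ_pos _⟩ ≠ 0 := by
  intro h0
  obtain ⟨⟨hinj, _⟩, hbr⟩ := hφ
  set e1 := eb K m k ⟨0, Nat.succ_pos _⟩ with he1
  have hz : mu1Br K m k (φ e1) (φ e1) = 0 := by
    unfold mu1Br
    refine Prod.ext (funext fun i => ?_) (funext fun j => ?_)
    · simp only
      split
      · rw [h0, mul_zero]; rfl
      · rfl
    · simp only
      split
      · rw [h0, zero_mul]; rfl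
      · rfl
  have h2 : φ (mu1Br K m k e1 e1) = 0 := by rw [hbr, hz]
  have h2' : mu1Br K m k e1 e1 = 0 := by
    apply hinj
    rw [h2, map_zero]
  have := congrArg (fun z : MuV m k K => z.1 ⟨1, by omega⟩) h2'
  simp only [mu1Br, he1, eb] at this
  norm_num at this
end

section
/- Let φ be an automorphism of μ1 with φ(e_1) = Σ_{i=1}^{n−2k} a_i e_i + Σ_{i=1}^{2k} b_i f_i. Then for 3 ≤ i ≤ n−2k one has φ(e_i) = a_1^{i−1} Σ_{t=i}^{n−2k} a_{t−i+1} e_t, and φ(e_2) = a_1 Σ_{i=2}^{n−2k} a_{i−1} e_i + a_1 Σ_{i=1}^{k} b_i f_{k+i}. -/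
variable {K : Type*} [Field K]

/-- For any automorphism `φ` of `μ₁` with `φ(e_1) = Σ aᵢ eᵢ + Σ bᵢ fᵢ`:
`φ(e_i) = a_1^{i-1} Σ_{t=i}^{n-2k} a_{t-i+1} e_t` for `3 ≤ i ≤ n-2k`, and
`φ(e_2) = a_1 Σ_{i=2}^{n-2k} a_{i-1} e_i + a_1 Σ_{i=1}^{k} b_i f_{k+i}`
(everything written in 0-indexed coordinates; paper `k` is `k + 1`). -/
theorem stmt6 (K : Type*) [Field K] [CharZero K] (m k : ℕ)
    (φ : MuV m k K →ₗ[K] MuV m k K) (hφ : IsMu1Aut m k φ)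
    (a : Fin (m + 4) → K) (b : Fin (2 * (k + 1)) → K)
    (ha : a = (φ (eb K m k ⟨0, Nat.succ_pos _⟩)).1)
    (hb : b = (φ (eb K m k ⟨0, Nat.succ_pos _⟩)).2) :
    (∀ i : Fin (m + 4), 2 ≤ (i : ℕ) →
      φ (eb K m k i) =
        (fun t : Fin (m + 4) => if (i : ℕ) ≤ (t : ℕ) then
            a ⟨0, Nat.succ_pos _⟩ ^ (i : ℕ) *
              a ⟨(t : ℕ) - (i : ℕ), lt_of_le_of_lt (Nat.sub_le _ _) t.isLt⟩
          else 0, 0)) ∧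
    φ (eb K m k ⟨1, by omega⟩) =
      (fun t : Fin (m + 4) => if 1 ≤ (t : ℕ) then
          a ⟨0, Nat.succ_pos _⟩ * a ⟨(t : ℕ) - 1, lt_of_le_of_lt (Nat.sub_le _ _) t.isLt⟩
        else 0,
       fun j : Fin (2 * (k + 1)) => if k + 1 ≤ (j : ℕ) then
          a ⟨0, Nat.succ_pos _⟩ *
            b ⟨(j : ℕ) - (k + 1), lt_of_le_of_lt (Nat.sub_le _ _) j.isLt⟩
        else 0) := by

  obtain ⟨hbij, hmul⟩ := hφ
  have hφe1 : φ (eb K m k ⟨0, Nat.succ_pos _⟩) = (a, b) := by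
    rw [ha, hb]
  -- e_{i+1} = [e_i, e_1]
  have hstep : ∀ i : Fin (m + 4), 1 ≤ (i : ℕ) →
      eb K m k i = mu1Br K m k
        (eb K m k ⟨(i : ℕ) - 1, lt_of_le_of_lt (Nat.sub_le _ _) i.isLt⟩)
        (eb K m k ⟨0, Nat.succ_pos _⟩) := by
    intro i hi
    unfold eb mu1Br
    refine Prod.ext ?_ ?_
    · funext t
      simp only [Pi.single_apply, Fin.mk.injEq]
      by_cases ht : 1 ≤ (t : ℕ)
      · rw [if_pos ht]
        by_cases hti : t = i
        · have : (t : ℕ) - 1 = (i : ℕ) - 1 := by rw [hti]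
          simp [hti, this]
        · have h1 : ¬ ((t : ℕ) - 1 = (i : ℕ) - 1) := by
            intro h
            apply hti
            apply Fin.ext
            omega
          have h2 : ¬ (t = i) := hti
          simp [h1, h2]
      · have h0 : (t : ℕ) = 0 := by omega
        have h2 : ¬ (t = i) := by
          intro h; rw [h] at h0; omega
        simp [ht, h2]
    · funext j
      simp only
      by_cases hj : k + 1 ≤ (j : ℕ) <;> simp [hj]
  have hφstep : ∀ i : Fin (m + 4), 1 ≤ (i : ℕ) →
      φ (eb K m k i) = mu1Br K m k
        (φ (eb K m k ⟨(i : ℕ) - 1, lt_of_le_of_lt (Nat.sub_le _ _) i.isLt⟩)) (a, b) := by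
    intro i hi
    rw [hstep i hi, hmul, hφe1]
  -- formula for e_2 (index 1)
  have h2 : φ (eb K m k ⟨1, by omega⟩) =
      (fun t : Fin (m + 4) => if 1 ≤ (t : ℕ) then
          a ⟨0, Nat.succ_pos _⟩ * a ⟨(t : ℕ) - 1, lt_of_le_of_lt (Nat.sub_le _ _) t.isLt⟩
        else 0,
       fun j : Fin (2 * (k + 1)) => if k + 1 ≤ (j : ℕ) then
          a ⟨0, Nat.succ_pos _⟩ *
            b ⟨(j : ℕ) - (k + 1), lt_of_le_of_lt (Nat.sub_le _ _) j.isLt⟩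
        else 0) := by
    rw [hφstep ⟨1, by omega⟩ (by norm_num)]
    simp only [hφe1]
    unfold mu1Br
    refine Prod.ext ?_ ?_
    · funext t
      simp only
      by_cases ht : 1 ≤ (t : ℕ)
      · simp only [if_pos ht]; ring
      · simp [ht]
    · rfl
  have hmain : ∀ n : ℕ, 2 ≤ n → ∀ hn : n < m + 4,
      φ (eb K m k ⟨n, hn⟩) =
        (fun t : Fin (m + 4) => if n ≤ (t : ℕ) then
            a ⟨0, Nat.succ_pos _⟩ ^ n *
              a ⟨(t : ℕ) - n, lt_of_le_of_lt (Nat.sub_le _ _) t.isLt⟩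
          else 0, 0) := by
    intro n hn
    induction n, hn using Nat.le_induction with
    | base =>
      intro hn
      rw [hφstep ⟨2, hn⟩ (by norm_num)]
      have : (⟨(2 : ℕ) - 1, lt_of_le_of_lt (Nat.sub_le _ _) (Fin.isLt ⟨2, hn⟩)⟩ : Fin (m+4))
          = ⟨1, by omega⟩ := rfl
      rw [this, h2]
      unfold mu1Br
      refine Prod.ext ?_ ?_
      · funext t
        simp only
        by_cases ht : 2 ≤ (t : ℕ)
        · have ht1 : 1 ≤ (t : ℕ) := by omega
          have ht2 : 1 ≤ (t : ℕ) - 1 := by omega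
          have he : (t : ℕ) - 1 - 1 = (t : ℕ) - 2 := by omega
          simp only [if_pos ht1, if_pos ht2, if_pos ht, he]
          ring
        · by_cases ht1 : 1 ≤ (t : ℕ)
          · have ht2 : ¬ (1 ≤ (t : ℕ) - 1) := by omega
            simp [ht1, ht2, ht]
          · simp [ht1, ht]
      · funext j
        simp only
        by_cases hj : k + 1 ≤ (j : ℕ) <;> simp [hj]
    | succ n hn2 ih =>
      intro hlt
      rw [hφstep ⟨n + 1, hlt⟩ (by simp)]
      have : (⟨(n + 1 : ℕ) - 1, lt_of_le_of_lt (Nat.sub_le _ _) (Fin.isLt ⟨n+1, hlt⟩)⟩ : Fin (m+4))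
          = ⟨n, by omega⟩ := rfl
      rw [this, ih (by omega)]
      unfold mu1Br
      refine Prod.ext ?_ ?_
      · funext t
        simp only
        by_cases ht : n + 1 ≤ (t : ℕ)
        · have ht1 : 1 ≤ (t : ℕ) := by omega
          have ht2 : n ≤ (t : ℕ) - 1 := by omega
          have he : (t : ℕ) - 1 - n = (t : ℕ) - (n + 1) := by omega
          simp only [if_pos ht1, if_pos ht2, if_pos ht, he, pow_succ]
          ring
        · by_cases ht1 : 1 ≤ (t : ℕ)
          · have ht2 : ¬ (n ≤ (t : ℕ) - 1) := by omega
            simp [ht1, ht2, ht]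
          · simp [ht1, ht]
      · funext j
        simp only
        by_cases hj : k + 1 ≤ (j : ℕ)
        · have : ¬ (n ≤ (0 : ℕ)) := by omega
          simp [hj, this]
        · simp [hj]
  refine ⟨?_, h2⟩
  intro i hi
  have := hmain (i : ℕ) hi i.isLt
  simpa using this
end

section
/- Let φ be an automorphism of μ1 and write φ(f_i) = Σ_{j=1}^{n−2k} c_{j,i} e_j + Σ_{j=1}^{2k} d_{j,i} f_j for 1 ≤ i ≤ k. Then c_{j,i} = 0 for all 1 ≤ j ≤ n−2k−1, and φ(f_{k+i}) = a_1 Σ_{j=1}^{k} d_{j,i} f_{k+j}, where a_1 is the e_1-coefficient of φ(e_1). -/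
variable {K : Type*} [Field K]

/-- For any automorphism `φ` of `μ₁`, writing
`φ(f_i) = Σ c_{j,i} e_j + Σ d_{j,i} f_j` for `1 ≤ i ≤ k`:
`c_{j,i} = 0` for `1 ≤ j ≤ n - 2k - 1`, and
`φ(f_{k+i}) = a_1 Σ_{j=1}^k d_{j,i} f_{k+j}` where `a_1` is the `e_1`-coefficient
of `φ(e_1)` (0-indexed; paper `k` is `k + 1`). -/
theorem stmt7 (K : Type*) [Field K] [CharZero K] (m k : ℕ)
    (φ : MuV m k K →ₗ[K] MuV m k K) (hφ : IsMu1Aut m k φ)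
    (a1 : K) (ha1 : a1 = (φ (eb K m k ⟨0, Nat.succ_pos _⟩)).1 ⟨0, Nat.succ_pos _⟩) :
    (∀ i : Fin (2 * (k + 1)), (i : ℕ) ≤ k → ∀ j : Fin (m + 4), (j : ℕ) ≤ m + 2 →
      (φ (fb K m k i)).1 j = 0) ∧
    (∀ (i : Fin (2 * (k + 1))) (hi : (i : ℕ) ≤ k),
      φ (fb K m k ⟨(k + 1) + (i : ℕ), by omega⟩) =
        (0, fun j : Fin (2 * (k + 1)) => if k + 1 ≤ (j : ℕ) then
            a1 * (φ (fb K m k i)).2 ⟨(j : ℕ) - (k + 1), lt_of_le_of_lt (Nat.sub_le _ _) j.isLt⟩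
          else 0)) := by

  obtain ⟨hbij, hbr⟩ := hφ
  have hm0 : (⟨0, Nat.succ_pos _⟩ : Fin (m + 4)) = 0 := Fin.ext (by simp)
  have ha1' : (φ (eb K m k 0)).1 0 = a1 := by rw [ha1, hm0]
  have ha1ne : a1 ≠ 0 := by
    intro h0
    have haz : (φ (eb K m k 0)).1 0 = 0 := ha1'.trans h0
    have he2 : mu1Br K m k (eb K m k ⟨0, Nat.succ_pos _⟩) (eb K m k ⟨0, Nat.succ_pos _⟩)
        = eb K m k ⟨1, by omega⟩ := by
      refine Prod.ext (funext fun j => ?_) (funext fun j => ?_) <;>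
        simp [mu1Br, eb, Pi.single_apply, Fin.ext_iff] <;>
        split_ifs <;> first | rfl | (exfalso; omega)
    have hz : φ (eb K m k ⟨1, by omega⟩) = 0 := by
      rw [← he2, hbr]
      refine Prod.ext (funext fun j => ?_) (funext fun j => ?_) <;>
        simp [mu1Br, hm0, haz]
    have h0' : eb K m k (⟨1, by omega⟩ : Fin (m + 4)) = 0 :=
      hbij.injective (by rw [hz, map_zero])
    have := congrArg (fun v : MuV m k K => v.1 ⟨1, by omega⟩) h0'
    simp [eb] at this
  have hc : ∀ i : Fin (2 * (k + 1)), ∀ j : Fin (m + 4), (j : ℕ) ≤ m + 2 →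
      (φ (fb K m k i)).1 j = 0 := by
    intro i j hj
    have hz : mu1Br K m k (fb K m k i) (eb K m k ⟨0, Nat.succ_pos _⟩) = 0 := by
      refine Prod.ext (funext fun j => ?_) (funext fun j => ?_) <;>
        simp [mu1Br, fb]
    have h := hbr (fb K m k i) (eb K m k ⟨0, Nat.succ_pos _⟩)
    rw [hz, map_zero] at h
    have h1 := congrArg (fun v : MuV m k K => v.1 ⟨(j : ℕ) + 1, by omega⟩) h.symm
    simp [mu1Br, hm0] at h1
    rcases h1 with h2 | h2
    · exact h2
    · exact absurd (ha1'.symm.trans h2) ha1ne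
  refine ⟨fun i _ j hj => hc i j hj, fun i hi => ?_⟩
  have hf : mu1Br K m k (eb K m k ⟨0, Nat.succ_pos _⟩) (fb K m k i)
      = fb K m k ⟨(k + 1) + (i : ℕ), by omega⟩ := by
    refine Prod.ext (funext fun j => ?_) (funext fun j => ?_) <;>
      simp [mu1Br, eb, fb, Pi.single_apply, Fin.ext_iff] <;>
      split_ifs <;> first | rfl | (exfalso; omega)
  have h := hbr (eb K m k ⟨0, Nat.succ_pos _⟩) (fb K m k i)
  rw [hf] at h
  rw [h]
  refine Prod.ext (funext fun j => ?_) (funext fun j => ?_)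
  · simp only [mu1Br]
    split_ifs with h1
    · rw [hc i ⟨0, Nat.succ_pos _⟩ (Nat.zero_le _), mul_zero]
      rfl
    · rfl
  · simp [mu1Br, hm0, ha1']
end

section
/- If Δ is a local automorphism of μ1, then for 1 ≤ i ≤ k, Δ(f_i) lies in the span of {e_{n−2k}, f_1,…,f_{2k}}, and for k+1 ≤ i ≤ 2k, Δ(f_i) lies in the span of {f_{k+1},…,f_{2k}}. -/
variable {K : Type*} [Field K]

lemma fb_inL (m k : ℕ) (j : Fin (2 * (k + 1))) (y : MuV m k K) :
    mu1Br K m k (fb K m k j) y = 0 := by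
  refine Prod.ext ?_ ?_ <;> funext i <;> simp [mu1Br, fb]

lemma aut_ann {m k : ℕ} {φ : MuV m k K →ₗ[K] MuV m k K} (hφ : IsMu1Aut m k φ)
    {x : MuV m k K} (hx : ∀ y, mu1Br K m k x y = 0) :
    ∀ z, mu1Br K m k (φ x) z = 0 := by
  intro z
  obtain ⟨y, rfl⟩ := hφ.1.2 z
  rw [← hφ.2, hx y, map_zero]

lemma ann_coords {m k : ℕ} {x : MuV m k K} (hx : ∀ y, mu1Br K m k x y = 0)
    (j : Fin (m + 4)) (hj : (j : ℕ) < m + 3) : x.1 j = 0 := by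
  have h := congrArg (fun z => z.1 ⟨(j : ℕ) + 1, by omega⟩) (hx (eb K m k ⟨0, by omega⟩))
  simpa [mu1Br, eb] using h

lemma fb_eq_br (m k : ℕ) (i : Fin (2 * (k + 1))) (hi : k + 1 ≤ (i : ℕ)) :
    fb K m k i = mu1Br K m k (eb K m k ⟨0, by omega⟩)
      (fb K m k ⟨(i : ℕ) - (k + 1), by omega⟩) := by
  refine Prod.ext ?_ ?_ <;> funext j <;> simp [mu1Br, fb, eb, Pi.single_apply, Fin.ext_iff]
  split_ifs <;> first | rfl | omega

/-- If `Δ` is a local automorphism of `μ₁`, then for `1 ≤ i ≤ k`, `Δ(f_i)` lies in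
the span of `{e_{n-2k}, f_1, …, f_{2k}}`, and for `k + 1 ≤ i ≤ 2k`, `Δ(f_i)` lies in
the span of `{f_{k+1}, …, f_{2k}}` (0-indexed; paper `k` is `k + 1`). -/
theorem stmt15 (K : Type*) [Field K] [CharZero K] [IsAlgClosed K] (m k : ℕ)
    (Δ : MuV m k K →ₗ[K] MuV m k K) (hΔ : IsMu1LocAut m k Δ) :
    (∀ i : Fin (2 * (k + 1)), (i : ℕ) ≤ k →
      ∀ j : Fin (m + 4), (j : ℕ) < m + 3 → (Δ (fb K m k i)).1 j = 0) ∧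
    (∀ i : Fin (2 * (k + 1)), k + 1 ≤ (i : ℕ) →
      (Δ (fb K m k i)).1 = 0 ∧
      ∀ j : Fin (2 * (k + 1)), (j : ℕ) < k + 1 → (Δ (fb K m k i)).2 j = 0) := by
  constructor
  · intro i hi j hj
    obtain ⟨φ, hφ, hΔx⟩ := hΔ (fb K m k i)
    rw [hΔx]
    exact ann_coords (aut_ann hφ (fb_inL m k i)) j hj
  · intro i hi
    obtain ⟨φ, hφ, hΔx⟩ := hΔ (fb K m k i)
    have key : Δ (fb K m k i) = mu1Br K m k (φ (eb K m k ⟨0, by omega⟩))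
        (φ (fb K m k ⟨(i : ℕ) - (k + 1), by omega⟩)) := by
      rw [hΔx, fb_eq_br m k i hi, hφ.2]
    have hy0 : (φ (fb K m k ⟨(i : ℕ) - (k + 1), by omega⟩)).1 ⟨0, Nat.succ_pos _⟩ = 0 :=
      ann_coords (aut_ann hφ (fb_inL m k _)) _ (Nat.succ_pos _)
    constructor
    · funext j
      rw [key]
      show (if 1 ≤ (j : ℕ) then _ * _ else 0) = (0 : K)
      rw [hy0]
      split <;> simp
    · intro j hj
      rw [key]
      show (if k + 1 ≤ (j : ℕ) then _ else 0) = (0 : K)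
      rw [if_neg (by omega)]
end
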